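/- There exists a constant C_Γ > 0, depending only on the Schottky data, such that for every τ ∈ (0,1]: C_Γ^{-1} τ^{-δ} ≤ #(Z(τ)) ≤ C_Γ τ^{-δ}. -/

import Mathlib

open MeasureTheory Set Real Pointwise

noncomputable section

abbrev SL2 := Matrix.SpecialLinearGroup (Fin 2) ℝ

/-- The Möbius transformation of `ℝ` associated to `g ∈ SL(2,ℝ)` (junk value at the pole). -/
def mobius (g : SL2) (x : ℝ) : ℝ :=
  (g 0 0 * x + g 0 1) / (g 1 0 * x + g 1 1)

/-- The derivative `γ'(x) = (cx+d)⁻²` of the Möbius transformation. -/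
def mobiusDeriv (g : SL2) (x : ℝ) : ℝ :=
  ((g 1 0 * x + g 1 1) ^ 2)⁻¹

/-- The derivative of the Möbius transformation in the ball model,
`|γ'(x)|_B = ((1+x²)/(1+γ(x)²)) γ'(x)`. -/
def mobiusDerivB (g : SL2) (x : ℝ) : ℝ :=
  ((1 + x ^ 2) / (1 + mobius g x ^ 2)) * mobiusDeriv g x

/-- The Möbius action of `SL(2,ℝ)` on `ℝ ∪ {∞}`. -/
def mobiusOP (g : SL2) (x : OnePoint ℝ) : OnePoint ℝ :=
  Option.elim x
    (if g 1 0 = 0 then OnePoint.infty else ((g 0 0 / g 1 0 : ℝ) : OnePoint ℝ))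
    (fun y => if g 1 0 * y + g 1 1 = 0 then OnePoint.infty
      else ((mobius g y : ℝ) : OnePoint ℝ))

/-- The pole `γ⁻¹(∞) = -d/c` of `γ = [[a,b],[c,d]]`. -/
def mobiusPole (g : SL2) : ℝ := -(g 1 1) / (g 1 0)

/-- The distortion factor `α(γ, [x₀,x₁]) = log((γ⁻¹(∞) − x₁)/(γ⁻¹(∞) − x₀))`,
with the convention `α = 0` when `γ⁻¹(∞) = ∞` (i.e. `c = 0`). -/
def alphaDist (g : SL2) (x₀ x₁ : ℝ) : ℝ :=
  if g 1 0 = 0 then 0 else Real.log ((mobiusPole g - x₁) / (mobiusPole g - x₀))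

/-- The letter `ā` paired with `a` in the alphabet `{1,…,2r}` (modelled by `Fin (2r)`). -/
def bar {r : ℕ} (a : Fin (2 * r)) : Fin (2 * r) :=
  if h : (a : ℕ) < r then ⟨(a : ℕ) + r, by omega⟩
  else ⟨(a : ℕ) - r, by have := a.isLt; omega⟩

/-- Schottky data: `2r` disjoint compact intervals `I_a = [ξ₀ a, ξ₁ a]` on the real line and
transformations `γ_a ∈ SL(2,ℝ)` with `γ_ā = γ_a⁻¹` such that `γ_a` maps the complement (in
`ℝ ∪ {∞}`) of the interior of `I_ā` onto `I_a`. -/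
structure SchottkyData (r : ℕ) where
  hr : 2 ≤ r
  ξ₀ : Fin (2 * r) → ℝ
  ξ₁ : Fin (2 * r) → ℝ
  hlt : ∀ a, ξ₀ a < ξ₁ a
  hdisj : ∀ a b, a ≠ b → Disjoint (Icc (ξ₀ a) (ξ₁ a)) (Icc (ξ₀ b) (ξ₁ b))
  γ : Fin (2 * r) → SL2
  hinv : ∀ a, γ (bar a) = (γ a)⁻¹
  hmap : ∀ a, mobiusOP (γ a) ''
      (univ \ ((fun t : ℝ => (t : OnePoint ℝ)) '' Ioo (ξ₀ (bar a)) (ξ₁ (bar a))))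
      = (fun t : ℝ => (t : OnePoint ℝ)) '' Icc (ξ₀ a) (ξ₁ a)

namespace SchottkyData

variable {r : ℕ}

/-- `l` is a word: no letter is followed by its bar. -/
def IsWord (_ : SchottkyData r) (l : List (Fin (2 * r))) : Prop :=
  l.Chain' fun p q => q ≠ bar p

/-- The group element `γ_𝐚 = γ_{a_1} ⋯ γ_{a_n}` of a word. -/
def wordγ (S : SchottkyData r) (l : List (Fin (2 * r))) : SL2 :=
  (l.map S.γ).prod

/-- The interval `I_𝐚 = γ_{𝐚'}(I_{a_n})` of a nonempty word (and `∅` for the empty word). -/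
def wordI (S : SchottkyData r) (l : List (Fin (2 * r))) : Set ℝ :=
  if h : l = [] then ∅
  else mobius (S.wordγ l.dropLast) '' Icc (S.ξ₀ (l.getLast h)) (S.ξ₁ (l.getLast h))

/-- The limit set `Λ_Γ = ⋂_n ⋃_{𝐚 ∈ W_n} I_𝐚`. -/
def limitSet (S : SchottkyData r) : Set ℝ :=
  ⋂ n : ℕ, ⋃ (l : List (Fin (2 * r))) (_ : S.IsWord l ∧ l.length = n + 1), S.wordI l

/-- `μ` is the (δ-conformal) Patterson–Sullivan measure: a Borel probability measure
supported on the limit set satisfying the equivariance property under the group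
generated by the Schottky transformations. -/
def IsPS (S : SchottkyData r) (δ : ℝ) (μ : Measure ℝ) : Prop :=
  IsProbabilityMeasure μ ∧ μ S.limitSetᶜ = 0 ∧
    ∀ g ∈ Subgroup.closure (Set.range S.γ), ∀ f : ℝ → ℝ, Measurable f →
      (∃ C, ∀ x, |f x| ≤ C) →
      ∫ x, f x ∂μ = ∫ x, f (mobius g x) * mobiusDerivB g x ^ δ ∂μ

/-- The partition `Z(τ) = {𝐚 ∈ W° : |I_𝐚| ≤ τ < |I_{𝐚'}|}` (with `|I_∅| = ∞`). -/
def Zpart (S : SchottkyData r) (τ : ℝ) : Set (List (Fin (2 * r))) :=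
  {l | S.IsWord l ∧ l ≠ [] ∧ (MeasureTheory.volume (S.wordI l)).toReal ≤ τ ∧
    (l.dropLast = [] ∨ τ < (MeasureTheory.volume (S.wordI l.dropLast)).toReal)}

end SchottkyData

/-- The length `|I|` of an interval `I ⊂ ℝ`. -/
def ivlen (I : Set ℝ) : ℝ := (MeasureTheory.volume I).toReal

/-- `𝐚 ⇝ 𝐛` : the last letter of `𝐚` equals the first letter of `𝐛`. -/
def chn {X : Type*} (l m : List X) : Prop :=
  ∃ (h1 : l ≠ []) (h2 : m ≠ []), l.getLast h1 = m.head h2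

/-- The center of an interval. -/
def ctr (I : Set ℝ) : ℝ := (sInf I + sSup I) / 2

end

/-!
The intervals `I_𝐚`, `𝐚 ∈ Z(τ)`, are pairwise disjoint and cover the limit set, so their
`μ`-masses add up to `1`. The pole of `γ_𝐚` lies in `I_{ā_n}`, whose distance to every `I_b` with
`b ≠ ā_n` is bounded above and below; this bounded distortion makes `|γ_𝐚'|_B` comparable to
`|I_{𝐚b}|` on `I_b`, and `|I_{𝐚b}|` comparable to `|I_𝐚|`. By `δ`-conformality,
`μ(I_{𝐚b}) = ∫_{I_b} |γ_𝐚'|_B^δ dμ ≍ |I_{𝐚b}|^δ`, while `|I_𝐚| ≍ τ` for `𝐚 ∈ Z(τ)`. Hence each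
of these intervals has mass `≍ τ^δ`, and there are `≍ τ^{-δ}` of them.
-/

noncomputable section

lemma exists_pos_forall_of_finite {ι : Type*} [Finite ι] {P : ι → ℝ → Prop}
    (hP : ∀ i c c', c' ≤ c → P i c → P i c') (h : ∀ i, ∃ c > 0, P i c) : ∃ c > 0, ∀ i, P i c := by
  choose f hf₀ hf using h
  cases isEmpty_or_nonempty ι
  · exact ⟨1, one_pos, fun i ↦ isEmptyElim i⟩
  · obtain ⟨i₀, hi₀⟩ := Finite.exists_min f
    exact ⟨f i₀, hf₀ i₀, fun i ↦ hP i _ _ (hi₀ i) (hf i)⟩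

lemma exists_ne_ne_of_three_le_card {α : Type*} [Fintype α] (h : 3 ≤ Fintype.card α)
    (a b : α) : ∃ c, c ≠ a ∧ c ≠ b := by
  classical
  have hlt : ({a, b} : Finset α).card < (Finset.univ : Finset α).card :=
    Finset.card_le_two.trans_lt (by rwa [Finset.card_univ])
  obtain ⟨c, -, hc⟩ := Finset.exists_mem_notMem_of_card_lt_card hlt
  simp only [Finset.mem_insert, Finset.mem_singleton, not_or] at hc
  exact ⟨c, hc⟩

lemma inv_le_card_and_card_le_inv {ι : Type*} {s : Finset ι} {f : ι → ℝ} (hs : ∑ i ∈ s, f i = 1)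
    {a b : ℝ} (ha : 0 < a) (hb : 0 < b) (hf : ∀ i ∈ s, f i ∈ Icc a b) :
    b⁻¹ ≤ s.card ∧ (s.card : ℝ) ≤ a⁻¹ := by
  have hlow := s.card_nsmul_le_sum f a fun i hi ↦ (hf i hi).1
  have hup := s.sum_le_card_nsmul f b fun i hi ↦ (hf i hi).2
  rw [nsmul_eq_mul, hs] at hlow hup
  exact ⟨(inv_le_iff_one_le_mul₀ hb).2 hup, by rwa [← one_div, le_div_iff₀ ha]⟩

lemma setIntegral_mem_Icc {X : Type*} [MeasurableSpace X] {μ : Measure X} [IsFiniteMeasure μ]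
    {s : Set X} (hs : MeasurableSet s) {f : X → ℝ} (hf : Measurable f) {a b : ℝ}
    (h : ∀ x ∈ s, f x ∈ Icc a b) : ∫ x in s, f x ∂μ ∈ Icc (a * μ.real s) (b * μ.real s) := by
  have hint : IntegrableOn f s μ := by
    refine Measure.integrableOn_of_bounded (M := |a| + |b|) (measure_ne_top μ s)
      hf.aestronglyMeasurable ?_
    filter_upwards [ae_restrict_mem hs] with x hx
    rw [Real.norm_eq_abs, abs_le]
    constructor <;> linarith [(h x hx).1, (h x hx).2, neg_abs_le a, le_abs_self b, abs_nonneg a,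
      abs_nonneg b]
  refine ⟨setIntegral_ge_of_const_le_real hs (measure_ne_top μ s) (fun x hx ↦ (h x hx).1) hint, ?_⟩
  calc ∫ x in s, f x ∂μ ≤ ∫ _ in s, b ∂μ :=
        setIntegral_mono_on hint (integrableOn_const (measure_ne_top μ s)) hs fun x hx ↦ (h x hx).2
    _ = b * μ.real s := by rw [setIntegral_const, smul_eq_mul, mul_comm]

lemma one_add_sq_div_one_add_sq_mem_Icc {R x y : ℝ} (hx : x ∈ Icc (-R) R) (hy : y ∈ Icc (-R) R) :
    (1 + x ^ 2) / (1 + y ^ 2) ∈ Icc (1 + R ^ 2)⁻¹ (1 + R ^ 2) := by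
  have hx2 : x ^ 2 ≤ R ^ 2 := sq_le_sq' hx.1 hx.2
  have hy2 : y ^ 2 ≤ R ^ 2 := sq_le_sq' hy.1 hy.2
  constructor
  · rw [inv_eq_one_div, div_le_div_iff₀ (by positivity) (by positivity)]
    nlinarith [sq_nonneg x]
  · rw [div_le_iff₀ (by positivity)]
    nlinarith [sq_nonneg x, sq_nonneg y]

lemma ivlen_nonneg (A : Set ℝ) : 0 ≤ ivlen A := ENNReal.toReal_nonneg

lemma ivlen_Icc {u v : ℝ} (huv : u ≤ v) : ivlen (Icc u v) = v - u := by
  rw [ivlen, Real.volume_Icc, ENNReal.toReal_ofReal (by linarith)]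

lemma ivlen_mono {A B : Set ℝ} (hB : Bornology.IsBounded B) (h : A ⊆ B) : ivlen A ≤ ivlen B :=
  ENNReal.toReal_mono hB.measure_lt_top.ne (measure_mono h)

lemma ivlen_add_ivlen_le {A B C : Set ℝ} (hC : Bornology.IsBounded C) (hB : MeasurableSet B)
    (hAB : Disjoint A B) (hA : A ⊆ C) (hB' : B ⊆ C) : ivlen A + ivlen B ≤ ivlen C := by
  have hfin := hC.measure_lt_top (μ := volume).ne
  rw [ivlen, ivlen, ← ENNReal.toReal_add (ne_top_of_le_ne_top hfin (measure_mono hA))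
    (ne_top_of_le_ne_top hfin (measure_mono hB')), ← measure_union hAB hB]
  exact ENNReal.toReal_mono hfin (measure_mono (union_subset hA hB'))

def mobiusDen (g : SL2) (x : ℝ) : ℝ := g 1 0 * x + g 1 1

namespace SL2

lemma mul_apply (g h : SL2) (i j : Fin 2) : (g * h) i j = g i 0 * h 0 j + g i 1 * h 1 j := by
  rw [Matrix.SpecialLinearGroup.coe_mul, Matrix.mul_apply, Fin.sum_univ_two]

lemma det_eq_one (g : SL2) : g 0 0 * g 1 1 - g 0 1 * g 1 0 = 1 := by
  have := g.prop
  rwa [Matrix.det_fin_two] at this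

end SL2

section Mobius

variable (g h : SL2) {x y : ℝ}

lemma mobius_eq_div : mobius g x = (g 0 0 * x + g 0 1) / mobiusDen g x := rfl

lemma mobius_one (x : ℝ) : mobius 1 x = x := by simp [mobius]

lemma mobiusDen_one (x : ℝ) : mobiusDen 1 x = 1 := by simp [mobiusDen]

lemma continuous_mobiusDen : Continuous (mobiusDen g) := by
  unfold mobiusDen; fun_prop

lemma mobiusDen_eq_mul_sub_mobiusPole (hc : g 1 0 ≠ 0) (x : ℝ) :
    mobiusDen g x = g 1 0 * (x - mobiusPole g) := by
  unfold mobiusDen mobiusPole; field_simp; ring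

lemma mobiusDen_mul (hx : mobiusDen h x ≠ 0) :
    mobiusDen (g * h) x = mobiusDen g (mobius h x) * mobiusDen h x := by
  simp only [mobiusDen, mobius_eq_div, SL2.mul_apply] at *
  field_simp
  ring

/-- If `mobius h x` is a pole of `g`, both sides are the junk value `_ / 0 = 0`. -/
lemma mobius_mul (hx : mobiusDen h x ≠ 0) :
    mobius (g * h) x = mobius g (mobius h x) := by
  have hgh := mobiusDen_mul g h hx
  rw [mobius_eq_div, hgh, mobius_eq_div g, mobius_eq_div h]
  simp only [mobiusDen, mobius_eq_div, SL2.mul_apply] at *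
  field_simp
  ring

lemma mobius_sub_mobius (hx : mobiusDen g x ≠ 0) (hy : mobiusDen g y ≠ 0) :
    mobius g x - mobius g y = (x - y) / (mobiusDen g x * mobiusDen g y) := by
  rw [mobius_eq_div, mobius_eq_div, div_sub_div _ _ hx hy]
  congr 1
  unfold mobiusDen
  linear_combination (x - y) * SL2.det_eq_one g

lemma mobius_injOn : InjOn (mobius g) {x | mobiusDen g x ≠ 0} := by
  intro x hx y hy hxy
  have h := mobius_sub_mobius g hx hy
  rw [hxy, sub_self, eq_comm, div_eq_zero_iff, sub_eq_zero] at h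
  exact h.resolve_right (mul_ne_zero hx hy)

lemma mobiusDen_mul_pos {s : Set ℝ} (hs : IsPreconnected s) (H : ∀ x ∈ s, mobiusDen g x ≠ 0)
    (hx : x ∈ s) (hy : y ∈ s) : 0 < mobiusDen g x * mobiusDen g y := by
  have hIVT {a b : ℝ} (ha : a ∈ s) (hb : b ∈ s) (h : mobiusDen g a ≤ 0 ∧ 0 ≤ mobiusDen g b) :
      False := by
    obtain ⟨z, hz, hz0⟩ := hs.intermediate_value ha hb (continuous_mobiusDen g).continuousOn h
    exact H z hz hz0
  by_contra! hneg
  rcases mul_nonpos_iff.1 hneg with h | h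
  exacts [hIVT hy hx h.symm, hIVT hx hy h]

lemma mobius_strictMonoOn {s : Set ℝ} (hs : IsPreconnected s) (H : ∀ x ∈ s, mobiusDen g x ≠ 0) :
    StrictMonoOn (mobius g) s := by
  intro x hx y hy hxy
  have hpos := mobiusDen_mul_pos g hs H hy hx
  have := mobius_sub_mobius g (H y hy) (H x hx)
  have : 0 < mobius g y - mobius g x := by rw [this]; exact div_pos (by linarith) hpos
  linarith

variable {u v : ℝ}

lemma mobius_image_Icc (huv : u ≤ v) (H : ∀ x ∈ Icc u v, mobiusDen g x ≠ 0) :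
    mobius g '' Icc u v = Icc (mobius g u) (mobius g v) :=
  ContinuousOn.image_Icc_of_monotoneOn huv
    (ContinuousOn.div (by fun_prop) (continuous_mobiusDen g).continuousOn H)
    (mobius_strictMonoOn g isPreconnected_Icc H).monotoneOn

lemma ivlen_mobius_image_Icc (huv : u ≤ v) (H : ∀ x ∈ Icc u v, mobiusDen g x ≠ 0) :
    ivlen (mobius g '' Icc u v) = (v - u) / (mobiusDen g u * mobiusDen g v) := by
  have hu : u ∈ Icc u v := left_mem_Icc.2 huv
  have hv : v ∈ Icc u v := right_mem_Icc.2 huv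
  rw [mobius_image_Icc g huv H, ivlen_Icc ((mobius_strictMonoOn g isPreconnected_Icc H).monotoneOn
    hu hv huv), mobius_sub_mobius g (H v hv) (H u hu), mul_comm]

lemma mobiusDerivB_eq_zero (hx : mobiusDen g x = 0) : mobiusDerivB g x = 0 := by
  rw [mobiusDerivB, mobiusDeriv, show g 1 0 * x + g 1 1 = mobiusDen g x from rfl, hx]
  simp

end Mobius

lemma bar_bar {r : ℕ} (a : Fin (2 * r)) : bar (bar a) = a := by
  have := a.isLt
  unfold bar
  split_ifs with h₁ h₂ h₂ <;> ext <;> simp only at h₂ ⊢ <;> omega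

lemma ne_bar_comm {r : ℕ} {a c : Fin (2 * r)} : c ≠ bar a ↔ a ≠ bar c := by
  constructor <;> rintro h rfl <;> exact h (bar_bar _).symm

namespace SchottkyData

variable {r : ℕ}

lemma exists_ne_ne (S : SchottkyData r) (a b : Fin (2 * r)) : ∃ c, c ≠ a ∧ c ≠ b :=
  exists_ne_ne_of_three_le_card (by simp only [Fintype.card_fin]; linarith [S.hr]) a b

section Geometry

variable (S : SchottkyData r) {l m : List (Fin (2 * r))} {b : Fin (2 * r)}

lemma notMem_Ioo_of_mem_Icc {a b : Fin (2 * r)} (hab : a ≠ b) {x : ℝ}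
    (hx : x ∈ Icc (S.ξ₀ a) (S.ξ₁ a)) : x ∉ Ioo (S.ξ₀ b) (S.ξ₁ b) :=
  fun hxb ↦ Set.disjoint_left.1 (S.hdisj a b hab) hx (Ioo_subset_Icc_self hxb)

lemma γ_maps_compl_Ioo (a : Fin (2 * r)) {x : ℝ} (hx : x ∉ Ioo (S.ξ₀ (bar a)) (S.ξ₁ (bar a))) :
    mobiusDen (S.γ a) x ≠ 0 ∧ mobius (S.γ a) x ∈ Icc (S.ξ₀ a) (S.ξ₁ a) := by
  have hmem : mobiusOP (S.γ a) x ∈ (fun t : ℝ ↦ (t : OnePoint ℝ)) '' Icc (S.ξ₀ a) (S.ξ₁ a) := by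
    rw [← S.hmap a]
    refine ⟨x, ⟨trivial, ?_⟩, rfl⟩
    rintro ⟨t, ht, hte⟩
    exact hx (OnePoint.coe_eq_coe.1 hte ▸ ht)
  obtain ⟨t, ht, hte⟩ := hmem
  change t = if mobiusDen (S.γ a) x = 0 then OnePoint.infty else (mobius (S.γ a) x : OnePoint ℝ)
    at hte
  split_ifs at hte with hden
  · exact absurd hte (OnePoint.coe_ne_infty t)
  · exact ⟨hden, OnePoint.coe_eq_coe.1 hte ▸ ht⟩

lemma wordγ_nil : S.wordγ [] = 1 := rfl

lemma wordγ_cons (a : Fin (2 * r)) (l : List (Fin (2 * r))) :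
    S.wordγ (a :: l) = S.γ a * S.wordγ l := by
  simp [wordγ]

lemma wordγ_singleton (a : Fin (2 * r)) : S.wordγ [a] = S.γ a := by
  simp [wordγ]

lemma wordγ_append (l m : List (Fin (2 * r))) : S.wordγ (l ++ m) = S.wordγ l * S.wordγ m := by
  simp [wordγ]

lemma wordγ_mem_closure (l : List (Fin (2 * r))) :
    S.wordγ l ∈ Subgroup.closure (range S.γ) := by
  refine Subgroup.list_prod_mem _ fun _ hx ↦ ?_
  obtain ⟨a, -, rfl⟩ := List.mem_map.1 hx
  exact Subgroup.subset_closure (mem_range_self a)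

lemma wordγ_maps_compl_Ioo {l : List (Fin (2 * r))} (hl : S.IsWord l) (hne : l ≠ []) {x : ℝ}
    (hx : x ∉ Ioo (S.ξ₀ (bar (l.getLast hne))) (S.ξ₁ (bar (l.getLast hne)))) :
    mobiusDen (S.wordγ l) x ≠ 0 ∧
      mobius (S.wordγ l) x ∈ Icc (S.ξ₀ (l.head hne)) (S.ξ₁ (l.head hne)) := by
  induction l with
  | nil => exact absurd rfl hne
  | cons a l ih =>
    rcases l with _ | ⟨b, t⟩
    · simpa [wordγ_singleton] using S.γ_maps_compl_Ioo a hx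
    obtain ⟨hba, hbt⟩ := List.isChain_cons_cons.1 hl
    obtain ⟨hden, hmem⟩ := ih hbt (List.cons_ne_nil b t) (by simpa using hx)
    obtain ⟨hden', hmem'⟩ := S.γ_maps_compl_Ioo a (S.notMem_Ioo_of_mem_Icc hba hmem)
    rw [wordγ_cons, mobiusDen_mul _ _ hden, mobius_mul _ _ hden]
    exact ⟨mul_ne_zero hden' hden, hmem'⟩

/-- A word maps a half-line into a bounded interval, so it cannot be affine. -/
lemma wordγ_one_zero_ne_zero {l : List (Fin (2 * r))} (hl : S.IsWord l) (hne : l ≠ []) :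
    S.wordγ l 1 0 ≠ 0 := by
  set g := S.wordγ l
  intro hc
  have hdet := SL2.det_eq_one g
  rw [hc, mul_zero, sub_zero] at hdet
  have hmob : ∀ x, mobius g x = g 0 0 * (g 0 0 * x + g 0 1) := by
    intro x
    rw [mobius_eq_div, mobiusDen, hc, zero_mul, zero_add, div_eq_mul_inv,
      inv_eq_of_mul_eq_one_right (by rw [mul_comm]; exact hdet), mul_comm]
  set x := max (S.ξ₁ (bar (l.getLast hne)))
    ((S.ξ₁ (l.head hne) - g 0 0 * g 0 1 + 1) / g 0 0 ^ 2)
  have hx := (S.wordγ_maps_compl_Ioo hl hne (x := x) fun h ↦ (le_max_left _ _).not_gt h.2).2.2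
  have hpos : 0 < g 0 0 ^ 2 := by
    have := left_ne_zero_of_mul_eq_one hdet
    positivity
  have := (div_le_iff₀ hpos).1 (le_max_right _ _ : _ ≤ x)
  rw [hmob] at hx
  nlinarith

lemma mobiusPole_wordγ_mem {l : List (Fin (2 * r))} (hl : S.IsWord l) (hne : l ≠ []) :
    mobiusPole (S.wordγ l) ∈ Ioo (S.ξ₀ (bar (l.getLast hne))) (S.ξ₁ (bar (l.getLast hne))) := by
  by_contra h
  apply (S.wordγ_maps_compl_Ioo hl hne h).1
  rw [mobiusDen_eq_mul_sub_mobiusPole _ (S.wordγ_one_zero_ne_zero hl hne), sub_self, mul_zero]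

namespace IsWord

variable {S}

lemma of_append (h : S.IsWord (l ++ m)) : S.IsWord l := List.IsChain.left_of_append h

lemma tail {a : Fin (2 * r)} (h : S.IsWord (a :: l)) : S.IsWord l := List.IsChain.tail h

lemma ne_bar_getLast (h : S.IsWord (l ++ [b])) (hl : l ≠ []) : b ≠ bar (l.getLast hl) :=
  List.IsChain.rel_getLast_head_of_append h hl (List.cons_ne_nil b [])

lemma append_singleton (h : S.IsWord l) (hb : ∀ hl : l ≠ [], b ≠ bar (l.getLast hl)) :
    S.IsWord (l ++ [b]) := by
  refine List.IsChain.append h (List.isChain_singleton b) fun x hx y hy ↦ ?_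
  obtain ⟨l', rfl⟩ := List.getLast?_eq_some_iff.1 hx
  obtain rfl : y = b := by simpa using hy.symm
  simpa using hb (by simp)

end IsWord

lemma wordI_append_singleton (l : List (Fin (2 * r))) (b : Fin (2 * r)) :
    S.wordI (l ++ [b]) = mobius (S.wordγ l) '' Icc (S.ξ₀ b) (S.ξ₁ b) := by
  simp [wordI]

lemma wordI_singleton (a : Fin (2 * r)) : S.wordI [a] = Icc (S.ξ₀ a) (S.ξ₁ a) := by
  simp [wordI, wordγ_nil, mobius_one]

lemma mobiusDen_wordγ_ne_zero (h : S.IsWord (l ++ [b])) :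
    ∀ x ∈ Icc (S.ξ₀ b) (S.ξ₁ b), mobiusDen (S.wordγ l) x ≠ 0 := by
  intro x hx
  rcases eq_or_ne l [] with rfl | hl
  · simp [wordγ_nil, mobiusDen_one]
  · exact (S.wordγ_maps_compl_Ioo h.of_append hl
      (S.notMem_Ioo_of_mem_Icc (h.ne_bar_getLast hl) hx)).1

lemma mobius_wordγ_mem_head (h : S.IsWord (l ++ [b])) (hl : l ≠ []) :
    ∀ x ∈ Icc (S.ξ₀ b) (S.ξ₁ b), mobius (S.wordγ l) x ∈ Icc (S.ξ₀ (l.head hl)) (S.ξ₁ (l.head hl)) :=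
  fun _ hx ↦ (S.wordγ_maps_compl_Ioo h.of_append hl
    (S.notMem_Ioo_of_mem_Icc (h.ne_bar_getLast hl) hx)).2

lemma wordI_append_singleton_eq_Icc (h : S.IsWord (l ++ [b])) :
    S.wordI (l ++ [b]) = Icc (mobius (S.wordγ l) (S.ξ₀ b)) (mobius (S.wordγ l) (S.ξ₁ b)) := by
  rw [wordI_append_singleton, mobius_image_Icc _ (S.hlt b).le (S.mobiusDen_wordγ_ne_zero h)]

lemma ivlen_wordI_append_singleton (h : S.IsWord (l ++ [b])) :
    ivlen (S.wordI (l ++ [b])) = (S.ξ₁ b - S.ξ₀ b) /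
      (mobiusDen (S.wordγ l) (S.ξ₀ b) * mobiusDen (S.wordγ l) (S.ξ₁ b)) := by
  rw [wordI_append_singleton, ivlen_mobius_image_Icc _ (S.hlt b).le (S.mobiusDen_wordγ_ne_zero h)]

lemma ivlen_wordI_pos (hm : S.IsWord m) (hne : m ≠ []) : 0 < ivlen (S.wordI m) := by
  obtain ⟨l, b, rfl⟩ := (List.eq_nil_or_concat' m).resolve_left hne
  rw [S.ivlen_wordI_append_singleton hm]
  exact div_pos (sub_pos.2 (S.hlt b)) (mobiusDen_mul_pos _ isPreconnected_Icc
    (S.mobiusDen_wordγ_ne_zero hm) (left_mem_Icc.2 (S.hlt b).le) (right_mem_Icc.2 (S.hlt b).le))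

lemma exists_wordI_eq_Icc (hm : S.IsWord m) (hne : m ≠ []) :
    ∃ u v, u < v ∧ S.wordI m = Icc u v := by
  obtain ⟨l, b, rfl⟩ := (List.eq_nil_or_concat' m).resolve_left hne
  have hpos := S.ivlen_wordI_pos hm hne
  rw [S.wordI_append_singleton_eq_Icc hm, ivlen, Real.volume_Icc, ENNReal.toReal_ofReal',
    lt_max_iff] at hpos
  exact ⟨_, _, by simpa using hpos, S.wordI_append_singleton_eq_Icc hm⟩

lemma isBounded_wordI (hm : S.IsWord m) (hne : m ≠ []) : Bornology.IsBounded (S.wordI m) := by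
  obtain ⟨u, v, -, h⟩ := S.exists_wordI_eq_Icc hm hne
  exact h ▸ Metric.isBounded_Icc u v

lemma measurableSet_wordI (hm : S.IsWord m) (hne : m ≠ []) : MeasurableSet (S.wordI m) := by
  obtain ⟨u, v, -, h⟩ := S.exists_wordI_eq_Icc hm hne
  exact h ▸ measurableSet_Icc

lemma wordI_subset_head (hm : S.IsWord m) (hne : m ≠ []) :
    S.wordI m ⊆ Icc (S.ξ₀ (m.head hne)) (S.ξ₁ (m.head hne)) := by
  obtain ⟨l, b, rfl⟩ := (List.eq_nil_or_concat' m).resolve_left hne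
  rw [wordI_append_singleton]
  rintro _ ⟨x, hx, rfl⟩
  rcases eq_or_ne l [] with rfl | hl
  · simpa [wordγ_nil, mobius_one] using hx
  · rw [List.head_append_of_ne_nil hl]
    exact S.mobius_wordγ_mem_head hm hl x hx

lemma wordI_append_singleton_subset (hl : l ≠ []) (h : S.IsWord (l ++ [b])) :
    S.wordI (l ++ [b]) ⊆ S.wordI l := by
  obtain ⟨l, a, rfl⟩ := (List.eq_nil_or_concat' l).resolve_left hl
  have hba : b ≠ bar a := by simpa using h.ne_bar_getLast hl
  rw [wordI_append_singleton, wordI_append_singleton, wordγ_append, wordγ_singleton]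
  rintro _ ⟨x, hx, rfl⟩
  obtain ⟨hden, hmem⟩ := S.γ_maps_compl_Ioo a (S.notMem_Ioo_of_mem_Icc hba hx)
  rw [mobius_mul _ _ hden]
  exact mem_image_of_mem _ hmem

lemma wordI_subset_of_prefix (hm : S.IsWord m) (hl : l ≠ []) (hpre : l <+: m) :
    S.wordI m ⊆ S.wordI l := by
  induction m using List.reverseRecOn with
  | nil => exact absurd (List.prefix_nil.1 hpre) hl
  | append_singleton m b ih =>
    rcases List.prefix_concat_iff.1 hpre with rfl | hpre
    · exact subset_rfl
    have hm' : m ≠ [] := by rintro rfl; exact hl (List.prefix_nil.1 hpre)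
    exact (S.wordI_append_singleton_subset hm' hm).trans (ih hm.of_append hpre)

lemma wordI_append (hm : m ≠ []) (h : S.IsWord (l ++ m)) :
    S.wordI (l ++ m) = mobius (S.wordγ l) '' S.wordI m := by
  obtain ⟨m, b, rfl⟩ := (List.eq_nil_or_concat' m).resolve_left hm
  have hmb : S.IsWord (m ++ [b]) := List.IsChain.right_of_append h
  rw [← List.append_assoc, wordI_append_singleton, wordI_append_singleton, image_image,
    wordγ_append]
  exact image_congr fun x hx ↦ mobius_mul _ _ (S.mobiusDen_wordγ_ne_zero hmb x hx)

lemma wordI_cons {a : Fin (2 * r)} (hl : l ≠ []) (h : S.IsWord (a :: l)) :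
    S.wordI (a :: l) = mobius (S.γ a) '' S.wordI l := by
  simpa [wordγ_singleton] using S.wordI_append (l := [a]) hl h

lemma mobiusDen_γ_ne_zero_of_mem_wordI {a : Fin (2 * r)} (hl : l ≠ []) (h : S.IsWord (a :: l))
    {x : ℝ} (hx : x ∈ S.wordI l) : mobiusDen (S.γ a) x ≠ 0 := by
  have hhead : l.head hl ≠ bar a := by
    rcases l with _ | ⟨c, t⟩
    exacts [absurd rfl hl, (List.isChain_cons_cons.1 h).1]
  exact (S.γ_maps_compl_Ioo a
    (S.notMem_Ioo_of_mem_Icc hhead (S.wordI_subset_head h.tail hl hx))).1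

lemma disjoint_wordI (hl : S.IsWord l) (hm : S.IsWord m) (hl₀ : l ≠ []) (hm₀ : m ≠ [])
    (hlm : ¬ l <+: m) (hml : ¬ m <+: l) : Disjoint (S.wordI l) (S.wordI m) := by
  induction l generalizing m with
  | nil => exact absurd rfl hl₀
  | cons a l ih =>
    rcases m with _ | ⟨a', m⟩
    · exact absurd rfl hm₀
    by_cases haa : a = a'
    · subst haa
      simp only [List.cons_prefix_cons, true_and] at hlm hml
      have hl' : l ≠ [] := by rintro rfl; exact hlm List.nil_prefix
      have hm' : m ≠ [] := by rintro rfl; exact hml List.nil_prefix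
      rw [S.wordI_cons hl' hl, S.wordI_cons hm' hm, Set.disjoint_left]
      rintro _ ⟨x, hx, rfl⟩ ⟨y, hy, hxy⟩
      have hyx := mobius_injOn _ (S.mobiusDen_γ_ne_zero_of_mem_wordI hm' hm hy)
        (S.mobiusDen_γ_ne_zero_of_mem_wordI hl' hl hx) hxy
      exact Set.disjoint_left.1 (ih hl.tail hm.tail hl' hm' hlm hml) hx (hyx ▸ hy)
    · exact Set.disjoint_of_subset (S.wordI_subset_head hl hl₀) (S.wordI_subset_head hm hm₀)
        (S.hdisj a a' haa)

lemma isWord_pair {a b : Fin (2 * r)} (hba : b ≠ bar a) : S.IsWord [a, b] :=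
  List.isChain_cons_cons.2 ⟨hba, List.isChain_singleton b⟩

lemma exists_Icc_subset_Icc : ∃ R > 0, ∀ a, Icc (S.ξ₀ a) (S.ξ₁ a) ⊆ Icc (-R) R := by
  obtain ⟨R, hR, hsub⟩ := (Bornology.isBounded_iUnion.2 fun a ↦
    Metric.isBounded_Icc (S.ξ₀ a) (S.ξ₁ a)).subset_closedBall_lt 0 0
  refine ⟨R, hR, fun a ↦ ?_⟩
  simpa [Real.closedBall_eq_Icc] using (subset_iUnion _ a).trans hsub

lemma exists_gap : ∃ G > 0, ∀ a b, a ≠ b →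
    ∀ x ∈ Icc (S.ξ₀ a) (S.ξ₁ a), ∀ y ∈ Icc (S.ξ₀ b) (S.ξ₁ b), G ≤ |x - y| := by
  refine exists_pos_forall_of_finite (ι := Fin (2 * r) × Fin (2 * r))
    (P := fun p G ↦ p.1 ≠ p.2 → ∀ x ∈ Icc (S.ξ₀ p.1) (S.ξ₁ p.1), ∀ y ∈ Icc (S.ξ₀ p.2) (S.ξ₁ p.2),
      G ≤ |x - y|)
    (fun _ _ _ hc h hab x hx y hy ↦ hc.trans (h hab x hx y hy)) (fun ⟨a, b⟩ ↦ ?_) |>.imp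
    fun G hG ↦ ⟨hG.1, fun a b ↦ hG.2 (a, b)⟩
  by_cases hab : a = b
  · exact ⟨1, one_pos, fun h ↦ absurd hab h⟩
  obtain ⟨G, hG, h⟩ :=
    Metric.exists_pos_forall_lt_edist isCompact_Icc isClosed_Icc (S.hdisj a b hab)
  refine ⟨G, hG, fun _ x hx y hy ↦ ?_⟩
  have := h x hx y hy
  rw [edist_dist, Real.dist_eq] at this
  exact (ENNReal.coe_lt_ofReal.1 this).le

lemma abs_mobiusDen_wordγ (hl : S.IsWord l) (hne : l ≠ []) (x : ℝ) :
    |mobiusDen (S.wordγ l) x| = |S.wordγ l 1 0| * |x - mobiusPole (S.wordγ l)| := by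
  rw [mobiusDen_eq_mul_sub_mobiusPole _ (S.wordγ_one_zero_ne_zero hl hne), abs_mul]

/-- Bounded distortion: on `I_b` the pole of `γ_𝐚` stays at distance between `G` and `2R`. -/
lemma mobiusDen_wordγ_mul_le {R G : ℝ} (hG : 0 < G)
    (hR : ∀ a, Icc (S.ξ₀ a) (S.ξ₁ a) ⊆ Icc (-R) R)
    (hgap : ∀ a b, a ≠ b →
      ∀ x ∈ Icc (S.ξ₀ a) (S.ξ₁ a), ∀ y ∈ Icc (S.ξ₀ b) (S.ξ₁ b), G ≤ |x - y|)
    (hl : l ≠ []) (h : S.IsWord (l ++ [b])) {x y x' y' : ℝ} (hx : x ∈ Icc (S.ξ₀ b) (S.ξ₁ b))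
    (hy : y ∈ Icc (S.ξ₀ b) (S.ξ₁ b)) (hx' : x' ∈ Icc (S.ξ₀ b) (S.ξ₁ b))
    (hy' : y' ∈ Icc (S.ξ₀ b) (S.ξ₁ b)) :
    mobiusDen (S.wordγ l) x' * mobiusDen (S.wordγ l) y' ≤
      4 * R ^ 2 / G ^ 2 * (mobiusDen (S.wordγ l) x * mobiusDen (S.wordγ l) y) := by
  set g := S.wordγ l
  set t := |g 1 0|
  have hp := Ioo_subset_Icc_self (S.mobiusPole_wordγ_mem h.of_append hl)
  have hb := h.ne_bar_getLast hl
  have near {z : ℝ} (hz : z ∈ Icc (S.ξ₀ b) (S.ξ₁ b)) : |mobiusDen g z| ≤ t * (2 * R) := by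
    have h₁ := hR _ hz
    have h₂ := hR _ hp
    rw [S.abs_mobiusDen_wordγ h.of_append hl]
    exact mul_le_mul_of_nonneg_left (abs_sub_le_iff.2 ⟨by linarith [h₁.2, h₂.1],
      by linarith [h₁.1, h₂.2]⟩) (abs_nonneg _)
  have far {z : ℝ} (hz : z ∈ Icc (S.ξ₀ b) (S.ξ₁ b)) : t * G ≤ |mobiusDen g z| := by
    rw [S.abs_mobiusDen_wordγ h.of_append hl]
    exact mul_le_mul_of_nonneg_left (hgap _ _ hb _ hz _ hp) (abs_nonneg _)
  have hpos := mobiusDen_mul_pos g isPreconnected_Icc (S.mobiusDen_wordγ_ne_zero h) hx hy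
  calc mobiusDen g x' * mobiusDen g y'
      ≤ |mobiusDen g x'| * |mobiusDen g y'| := by rw [← abs_mul]; exact le_abs_self _
    _ ≤ (t * (2 * R)) * (t * (2 * R)) :=
        mul_le_mul (near hx') (near hy') (abs_nonneg _) ((abs_nonneg _).trans (near hx'))
    _ = 4 * R ^ 2 / G ^ 2 * ((t * G) * (t * G)) := by field_simp; ring
    _ ≤ 4 * R ^ 2 / G ^ 2 * (|mobiusDen g x| * |mobiusDen g y|) := by
        gcongr
        exacts [far hx, far hy]
    _ = 4 * R ^ 2 / G ^ 2 * (mobiusDen g x * mobiusDen g y) := by rw [← abs_mul, abs_of_pos hpos]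

structure Constants where
  R : ℝ
  ℓ : ℝ
  θ : ℝ
  D : ℝ
  R_pos : 0 < R
  ℓ_pos : 0 < ℓ
  θ_pos : 0 < θ
  D_pos : 0 < D
  Icc_subset : ∀ a, Icc (S.ξ₀ a) (S.ξ₁ a) ⊆ Icc (-R) R
  ℓ_le : ∀ a, ℓ ≤ S.ξ₁ a - S.ξ₀ a
  θ_mul_le : ∀ a b, b ≠ bar a → θ * (S.ξ₁ a - S.ξ₀ a) ≤ ivlen (S.wordI [a, b])
  mobiusDen_mul_le : ∀ l b, S.IsWord (l ++ [b]) →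
    ∀ x ∈ Icc (S.ξ₀ b) (S.ξ₁ b), ∀ y ∈ Icc (S.ξ₀ b) (S.ξ₁ b),
    ∀ x' ∈ Icc (S.ξ₀ b) (S.ξ₁ b), ∀ y' ∈ Icc (S.ξ₀ b) (S.ξ₁ b),
      mobiusDen (S.wordγ l) x' * mobiusDen (S.wordγ l) y' ≤
        D * (mobiusDen (S.wordγ l) x * mobiusDen (S.wordγ l) y)

lemma nonempty_constants : Nonempty S.Constants := by
  obtain ⟨R, hR, hsub⟩ := S.exists_Icc_subset_Icc
  obtain ⟨G, hG, hgap⟩ := S.exists_gap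
  obtain ⟨ℓ, hℓ, hℓle⟩ := exists_pos_forall_of_finite (P := fun a c ↦ c ≤ S.ξ₁ a - S.ξ₀ a)
    (fun _ _ _ ↦ le_trans) fun a ↦ ⟨_, sub_pos.2 (S.hlt a), le_rfl⟩
  obtain ⟨θ, hθ, hθle⟩ := exists_pos_forall_of_finite (ι := Fin (2 * r) × Fin (2 * r))
    (P := fun p c ↦ p.2 ≠ bar p.1 → c * (S.ξ₁ p.1 - S.ξ₀ p.1) ≤ ivlen (S.wordI [p.1, p.2]))
    (fun p _ _ hc h hp ↦ (mul_le_mul_of_nonneg_right hc (sub_pos.2 (S.hlt p.1)).le).trans (h hp))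
    fun ⟨a, b⟩ ↦ by
      by_cases hba : b = bar a
      · exact ⟨1, one_pos, fun h ↦ absurd hba h⟩
      have hw := sub_pos.2 (S.hlt a)
      exact ⟨_, div_pos (S.ivlen_wordI_pos (S.isWord_pair hba) (List.cons_ne_nil _ _)) hw,
        fun _ ↦ (div_mul_cancel₀ _ hw.ne').le⟩
  refine ⟨⟨R, ℓ, θ, max 1 (4 * R ^ 2 / G ^ 2), hR, hℓ, hθ, one_pos.trans_le (le_max_left _ _),
    hsub, hℓle, fun a b ↦ hθle (a, b), fun l b h x hx y hy x' hx' y' hy' ↦ ?_⟩⟩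
  rcases eq_or_ne l [] with rfl | hl
  · simp [wordγ_nil, mobiusDen_one]
  have hpos := mobiusDen_mul_pos _ isPreconnected_Icc (S.mobiusDen_wordγ_ne_zero h) hx hy
  exact (S.mobiusDen_wordγ_mul_le hG hsub hgap hl h hx hy hx' hy').trans
    (mul_le_mul_of_nonneg_right (le_max_right _ _) hpos.le)

end Geometry

variable {S : SchottkyData r} {l m m' : List (Fin (2 * r))} {b : Fin (2 * r)} {τ δ : ℝ}
  {μ : Measure ℝ}

lemma exists_ne_isWord_append_singleton (hl : S.IsWord (l ++ [b])) (hne : l ≠ []) :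
    ∃ b', b' ≠ b ∧ S.IsWord (l ++ [b']) := by
  obtain ⟨b', hb', hbar⟩ := S.exists_ne_ne b (bar (l.getLast hne))
  exact ⟨b', hb', hl.of_append.append_singleton fun _ ↦ hbar⟩

namespace Constants

variable (K : S.Constants)

def ε : ℝ := K.θ / K.D

def c₁ : ℝ := ((1 + K.R ^ 2) * (K.D * (2 * K.R)))⁻¹

def c₂ : ℝ := (1 + K.R ^ 2) * (K.D / K.ℓ)

lemma ε_pos : 0 < K.ε := div_pos K.θ_pos K.D_pos

lemma c₁_pos : 0 < K.c₁ := by have := K.R_pos; have := K.D_pos; unfold c₁; positivity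

lemma c₂_pos : 0 < K.c₂ := by have := K.ℓ_pos; have := K.D_pos; unfold c₂; positivity

lemma ivlen_Icc_le (a : Fin (2 * r)) : S.ξ₁ a - S.ξ₀ a ≤ 2 * K.R := by
  have h₀ := K.Icc_subset a (left_mem_Icc.2 (S.hlt a).le)
  have h₁ := K.Icc_subset a (right_mem_Icc.2 (S.hlt a).le)
  linarith [h₀.1, h₁.2]

lemma ε_mul_ivlen_le (hl : l ≠ []) (h : S.IsWord (l ++ [b])) :
    K.ε * ivlen (S.wordI l) ≤ ivlen (S.wordI (l ++ [b])) := by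
  obtain ⟨l, a, rfl⟩ := (List.eq_nil_or_concat' l).resolve_left hl
  set g := S.wordγ l
  have hba : b ≠ bar a := by simpa using h.ne_bar_getLast hl
  have hla : S.IsWord (l ++ [a]) := h.of_append
  have hab := S.isWord_pair hba
  obtain ⟨κ₀, κ₁, hκ, hIab⟩ := S.exists_wordI_eq_Icc hab (List.cons_ne_nil _ _)
  have hsub : Icc κ₀ κ₁ ⊆ Icc (S.ξ₀ a) (S.ξ₁ a) :=
    hIab ▸ S.wordI_subset_head hab (List.cons_ne_nil _ _)
  have hκ₀ := hsub (left_mem_Icc.2 hκ.le)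
  have hκ₁ := hsub (right_mem_Icc.2 hκ.le)
  have hu := left_mem_Icc.2 (S.hlt a).le
  have hv := right_mem_Icc.2 (S.hlt a).le
  have hden := S.mobiusDen_wordγ_ne_zero hla
  have hIlab : S.wordI (l ++ [a] ++ [b]) = mobius g '' Icc κ₀ κ₁ := by
    rw [← hIab, ← S.wordI_append (List.cons_ne_nil _ _) (by simpa using h)]
    simp
  have hθ : K.θ * (S.ξ₁ a - S.ξ₀ a) ≤ κ₁ - κ₀ := by
    simpa [hIab, ivlen_Icc hκ.le] using K.θ_mul_le a b hba
  have hD := K.mobiusDen_mul_le l a hla _ hu _ hv _ hκ₀ _ hκ₁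
  have hP := mobiusDen_mul_pos g isPreconnected_Icc hden hu hv
  have hPκ := mobiusDen_mul_pos g isPreconnected_Icc hden hκ₀ hκ₁
  rw [S.ivlen_wordI_append_singleton hla, hIlab,
    ivlen_mobius_image_Icc _ hκ.le fun x hx ↦ hden x (hsub hx)]
  calc K.ε * ((S.ξ₁ a - S.ξ₀ a) / (mobiusDen g (S.ξ₀ a) * mobiusDen g (S.ξ₁ a)))
      = K.θ * (S.ξ₁ a - S.ξ₀ a) / (K.D * (mobiusDen g (S.ξ₀ a) * mobiusDen g (S.ξ₁ a))) := by
        rw [ε]; field_simp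
    _ ≤ (κ₁ - κ₀) / (K.D * (mobiusDen g (S.ξ₀ a) * mobiusDen g (S.ξ₁ a))) := by
        gcongr; exact (mul_pos K.D_pos hP).le
    _ ≤ (κ₁ - κ₀) / (mobiusDen g κ₀ * mobiusDen g κ₁) :=
        div_le_div_of_nonneg_left (sub_pos.2 hκ).le hPκ hD

/-- A sibling `I_{𝐚b'}` of `I_{𝐚b}` takes up at least the fraction `ε` of `I_𝐚`. -/
lemma ivlen_append_singleton_le (hl : l ≠ []) (h : S.IsWord (l ++ [b])) :
    ivlen (S.wordI (l ++ [b])) ≤ (1 - K.ε) * ivlen (S.wordI l) := by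
  obtain ⟨b', hb', h'⟩ := exists_ne_isWord_append_singleton h hl
  have hsum := ivlen_add_ivlen_le (S.isBounded_wordI h.of_append hl)
    (S.measurableSet_wordI h' (by simp))
    (S.disjoint_wordI h h' (by simp) (by simp) (by simpa using hb'.symm) (by simpa using hb'))
    (S.wordI_append_singleton_subset hl h) (S.wordI_append_singleton_subset hl h')
  linarith [K.ε_mul_ivlen_le hl h']

lemma ε_lt_one : K.ε < 1 := by
  have a : Fin (2 * r) := ⟨0, by linarith [S.hr]⟩
  obtain ⟨b, hb, -⟩ := S.exists_ne_ne (bar a) (bar a)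
  have hab : S.IsWord ([a] ++ [b]) := S.isWord_pair hb
  have h := K.ivlen_append_singleton_le (List.cons_ne_nil _ _) hab
  have hpos := S.ivlen_wordI_pos hab (by simp)
  have hpos' := S.ivlen_wordI_pos (m := [a]) (List.isChain_singleton a) (by simp)
  nlinarith

lemma ivlen_wordI_le_pow (hm : S.IsWord m) (hne : m ≠ []) :
    ivlen (S.wordI m) ≤ 2 * K.R * (1 - K.ε) ^ (m.length - 1) := by
  induction m using List.reverseRecOn with
  | nil => exact absurd rfl hne
  | append_singleton l b ih =>
    rcases eq_or_ne l [] with rfl | hl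
    · simpa [wordI_singleton, ivlen_Icc (S.hlt b).le] using K.ivlen_Icc_le b
    calc ivlen (S.wordI (l ++ [b])) ≤ (1 - K.ε) * ivlen (S.wordI l) :=
          K.ivlen_append_singleton_le hl hm
      _ ≤ (1 - K.ε) * (2 * K.R * (1 - K.ε) ^ (l.length - 1)) :=
          mul_le_mul_of_nonneg_left (ih hm.of_append hl) (sub_pos.2 K.ε_lt_one).le
      _ = 2 * K.R * (1 - K.ε) ^ ((l ++ [b]).length - 1) := by
          have := List.length_pos_iff.2 hl
          rw [show (l ++ [b]).length - 1 = l.length - 1 + 1 by simp; omega, pow_succ]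
          ring

lemma mobiusDerivB_wordγ_mem_Icc (h : S.IsWord (l ++ [b])) {x : ℝ}
    (hx : x ∈ Icc (S.ξ₀ b) (S.ξ₁ b)) : mobiusDerivB (S.wordγ l) x ∈
      Icc (K.c₁ * ivlen (S.wordI (l ++ [b]))) (K.c₂ * ivlen (S.wordI (l ++ [b]))) := by
  set g := S.wordγ l
  have hden := S.mobiusDen_wordγ_ne_zero h
  have hu := left_mem_Icc.2 (S.hlt b).le
  have hv := right_mem_Icc.2 (S.hlt b).le
  set P := mobiusDen g (S.ξ₀ b) * mobiusDen g (S.ξ₁ b)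
  set Q := mobiusDen g x * mobiusDen g x
  have hP : 0 < P := mobiusDen_mul_pos g isPreconnected_Icc hden hu hv
  have hQ : 0 < Q := mobiusDen_mul_pos g isPreconnected_Icc hden hx hx
  have hQP : Q ≤ K.D * P := K.mobiusDen_mul_le l b h _ hu _ hv _ hx _ hx
  have hPQ : P ≤ K.D * Q := K.mobiusDen_mul_le l b h _ hx _ hx _ hu _ hv
  have hℓ := K.ℓ_le b
  have hR := K.ivlen_Icc_le b
  have hgx : mobius g x ∈ Icc (-K.R) K.R := by
    refine K.Icc_subset _ (S.wordI_subset_head h (by simp) ?_)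
    rw [wordI_append_singleton]
    exact mem_image_of_mem _ hx
  have hball := one_add_sq_div_one_add_sq_mem_Icc (K.Icc_subset b hx) hgx
  have hD := K.D_pos
  have := K.R_pos
  have := K.ℓ_pos
  have hball₀ : 0 ≤ (1 + x ^ 2) / (1 + mobius g x ^ 2) := by positivity
  rw [mobiusDerivB, show mobiusDeriv g x = Q⁻¹ by simp [mobiusDeriv, Q, mobiusDen, sq],
    S.ivlen_wordI_append_singleton h]
  constructor
  · calc K.c₁ * ((S.ξ₁ b - S.ξ₀ b) / P)
        = (1 + K.R ^ 2)⁻¹ * ((S.ξ₁ b - S.ξ₀ b) / (P * (K.D * (2 * K.R)))) := by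
          rw [c₁]; field_simp
      _ ≤ (1 + K.R ^ 2)⁻¹ * (2 * K.R / (P * (K.D * (2 * K.R)))) := by gcongr
      _ = (1 + K.R ^ 2)⁻¹ * (K.D * P)⁻¹ := by field_simp
      _ ≤ (1 + x ^ 2) / (1 + mobius g x ^ 2) * Q⁻¹ :=
          mul_le_mul hball.1 (inv_anti₀ hQ hQP) (by positivity) hball₀
  · have hQinv : Q⁻¹ ≤ K.D / P := by
      rw [le_div_iff₀ hP, inv_mul_eq_div, div_le_iff₀ hQ]
      linarith
    calc (1 + x ^ 2) / (1 + mobius g x ^ 2) * Q⁻¹ ≤ (1 + K.R ^ 2) * (K.D / P) :=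
          mul_le_mul hball.2 hQinv (by positivity) (by positivity)
      _ ≤ (1 + K.R ^ 2) * (K.D / P * ((S.ξ₁ b - S.ξ₀ b) / K.ℓ)) := by
          gcongr
          exact le_mul_of_one_le_right (by positivity) ((one_le_div K.ℓ_pos).2 hℓ)
      _ = K.c₂ * ((S.ξ₁ b - S.ξ₀ b) / P) := by rw [c₂]; ring

lemma ivlen_wordI_ge_of_mem_Zpart (hτ : τ ≤ 1) (hm : m ∈ S.Zpart τ) :
    min K.ε K.ℓ * τ ≤ ivlen (S.wordI m) := by
  obtain ⟨hw, hne, hlen, hdrop⟩ := hm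
  have hτ₀ : 0 ≤ τ := (ivlen_nonneg _).trans hlen
  obtain ⟨l, b, rfl⟩ := (List.eq_nil_or_concat' m).resolve_left hne
  rw [List.dropLast_concat] at hdrop
  rcases eq_or_ne l [] with rfl | hl
  · calc min K.ε K.ℓ * τ ≤ K.ℓ * 1 := mul_le_mul (min_le_right _ _) hτ hτ₀ K.ℓ_pos.le
      _ ≤ ivlen (S.wordI ([] ++ [b])) := by
        simpa [wordI_singleton, ivlen_Icc (S.hlt b).le] using K.ℓ_le b
  · calc min K.ε K.ℓ * τ ≤ K.ε * ivlen (S.wordI l) :=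
          mul_le_mul (min_le_left _ _) (hdrop.resolve_left hl).le hτ₀ K.ε_pos.le
      _ ≤ ivlen (S.wordI (l ++ [b])) := K.ε_mul_ivlen_le hl hw

end Constants

lemma mobius_wordγ_mem_wordI_iff (h : S.IsWord (l ++ [b])) {x : ℝ}
    (hx : mobiusDen (S.wordγ l) x ≠ 0) :
    mobius (S.wordγ l) x ∈ S.wordI (l ++ [b]) ↔ x ∈ Icc (S.ξ₀ b) (S.ξ₁ b) := by
  rw [wordI_append_singleton]
  refine ⟨fun ⟨y, hy, hyx⟩ ↦ ?_, mem_image_of_mem _⟩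
  rwa [← mobius_injOn _ (S.mobiusDen_wordγ_ne_zero h y hy) hx hyx]

/-- Conformality of `μ` under `γ_𝐚`, applied to the indicator of `I_{𝐚b} = γ_𝐚(I_b)`. -/
lemma measureReal_wordI_append_singleton (hμ : S.IsPS δ μ) (hδ : 0 < δ)
    (h : S.IsWord (l ++ [b])) : μ.real (S.wordI (l ++ [b])) =
      ∫ x in Icc (S.ξ₀ b) (S.ξ₁ b), mobiusDerivB (S.wordγ l) x ^ δ ∂μ := by
  have hmeas := S.measurableSet_wordI h (by simp)
  have hbdd : ∃ C, ∀ x, |(S.wordI (l ++ [b])).indicator (1 : ℝ → ℝ) x| ≤ C :=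
    ⟨1, fun x ↦ by by_cases hx : x ∈ S.wordI (l ++ [b]) <;> simp [hx]⟩
  have hconf := hμ.2.2 _ (S.wordγ_mem_closure l) _ (measurable_one.indicator hmeas) hbdd
  rw [integral_indicator_one hmeas] at hconf
  rw [hconf, ← integral_indicator measurableSet_Icc]
  congr 1 with x
  classical
  rw [indicator_apply, indicator_apply]
  -- at a pole `mobius` takes a junk value, but `mobiusDerivB` vanishes there
  by_cases hx : mobiusDen (S.wordγ l) x = 0
  · simp [mobiusDerivB_eq_zero _ hx, Real.zero_rpow hδ.ne']
  · simp only [mobius_wordγ_mem_wordI_iff h hx]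
    split_ifs <;> simp

lemma limitSet_subset_iUnion_Icc : S.limitSet ⊆ ⋃ a, Icc (S.ξ₀ a) (S.ξ₁ a) := by
  intro x hx
  obtain ⟨l, ⟨-, hl⟩, hxl⟩ := mem_iUnion₂.1 (mem_iInter.1 hx 0)
  obtain ⟨a, rfl⟩ := List.length_eq_one_iff.1 hl
  exact mem_iUnion.2 ⟨a, by rwa [wordI_singleton] at hxl⟩

lemma exists_measure_Icc_ne_zero (hμ : S.IsPS δ μ) : ∃ a, μ (Icc (S.ξ₀ a) (S.ξ₁ a)) ≠ 0 := by
  have := hμ.1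
  by_contra! h
  have hΛ : μ S.limitSet = 0 := measure_mono_null limitSet_subset_iUnion_Icc (measure_iUnion_null h)
  simpa [hΛ, hμ.2.1] using measure_univ_le_add_compl (μ := μ) S.limitSet

namespace Constants

variable (K : S.Constants)

lemma measureReal_wordI_append_singleton_mem_Icc (hμ : S.IsPS δ μ) (hδ : 0 < δ)
    (h : S.IsWord (l ++ [b])) : μ.real (S.wordI (l ++ [b])) ∈
      Icc ((K.c₁ * ivlen (S.wordI (l ++ [b]))) ^ δ * μ.real (Icc (S.ξ₀ b) (S.ξ₁ b)))
        ((K.c₂ * ivlen (S.wordI (l ++ [b]))) ^ δ * μ.real (Icc (S.ξ₀ b) (S.ξ₁ b))) := by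
  have := hμ.1
  have hc₁ : 0 ≤ K.c₁ * ivlen (S.wordI (l ++ [b])) :=
    mul_nonneg K.c₁_pos.le (ivlen_nonneg _)
  rw [measureReal_wordI_append_singleton hμ hδ h]
  refine setIntegral_mem_Icc measurableSet_Icc
    (by unfold mobiusDerivB mobiusDeriv mobius; fun_prop) fun x hx ↦ ?_
  obtain ⟨h₁, h₂⟩ := K.mobiusDerivB_wordγ_mem_Icc h hx
  exact ⟨Real.rpow_le_rpow hc₁ h₁ hδ.le, Real.rpow_le_rpow (hc₁.trans h₁) h₂ hδ.le⟩

lemma measureReal_wordI_mem_Icc_of_mem_Zpart (hμ : S.IsPS δ μ) (hδ : 0 < δ) {m₀ : ℝ}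
    (hm₀ : 0 ≤ m₀) (hm₀_le : ∀ b, m₀ ≤ μ.real (Icc (S.ξ₀ b) (S.ξ₁ b))) (hτ : τ ≤ 1)
    (hm : m ∈ S.Zpart τ) : μ.real (S.wordI m) ∈
      Icc ((K.c₁ * min K.ε K.ℓ) ^ δ * m₀ * τ ^ δ) (K.c₂ ^ δ * τ ^ δ) := by
  have := hμ.1
  have hL := K.ivlen_wordI_ge_of_mem_Zpart hτ hm
  obtain ⟨hw, hne, hLτ, -⟩ := hm
  have hτ₀ : 0 ≤ τ := (ivlen_nonneg _).trans hLτ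
  have hκ : 0 ≤ K.c₁ * min K.ε K.ℓ := mul_nonneg K.c₁_pos.le (le_min K.ε_pos.le K.ℓ_pos.le)
  obtain ⟨l, b, rfl⟩ := (List.eq_nil_or_concat' m).resolve_left hne
  obtain ⟨hlow, hup⟩ := K.measureReal_wordI_append_singleton_mem_Icc hμ hδ hw
  constructor
  · calc (K.c₁ * min K.ε K.ℓ) ^ δ * m₀ * τ ^ δ = (K.c₁ * (min K.ε K.ℓ * τ)) ^ δ * m₀ := by
          rw [← mul_assoc, Real.mul_rpow hκ hτ₀]; ring
      _ ≤ (K.c₁ * ivlen (S.wordI (l ++ [b]))) ^ δ * μ.real (Icc (S.ξ₀ b) (S.ξ₁ b)) := by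
          refine mul_le_mul (Real.rpow_le_rpow
            (mul_nonneg K.c₁_pos.le (mul_nonneg (le_min K.ε_pos.le K.ℓ_pos.le) hτ₀))
            (mul_le_mul_of_nonneg_left hL K.c₁_pos.le) hδ.le) (hm₀_le b) hm₀
            (Real.rpow_nonneg (mul_nonneg K.c₁_pos.le (ivlen_nonneg _)) δ)
      _ ≤ _ := hlow
  · calc μ.real (S.wordI (l ++ [b]))
        ≤ (K.c₂ * ivlen (S.wordI (l ++ [b]))) ^ δ * μ.real (Icc (S.ξ₀ b) (S.ξ₁ b)) := hup
      _ ≤ (K.c₂ * τ) ^ δ * 1 := by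
          refine mul_le_mul (Real.rpow_le_rpow (mul_nonneg K.c₂_pos.le (ivlen_nonneg _))
            (mul_le_mul_of_nonneg_left hLτ K.c₂_pos.le) hδ.le) measureReal_le_one
            measureReal_nonneg (Real.rpow_nonneg (mul_nonneg K.c₂_pos.le hτ₀) δ)
      _ = K.c₂ ^ δ * τ ^ δ := by rw [mul_one, Real.mul_rpow K.c₂_pos.le hτ₀]

end Constants

lemma exists_pos_le_measureReal_Icc (hμ : S.IsPS δ μ) (hδ : 0 < δ) :
    ∃ m₀ > 0, ∀ b, m₀ ≤ μ.real (Icc (S.ξ₀ b) (S.ξ₁ b)) := by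
  have := hμ.1
  obtain ⟨K⟩ := S.nonempty_constants
  obtain ⟨a, ha⟩ := exists_measure_Icc_ne_zero hμ
  refine exists_pos_forall_of_finite (P := fun b c ↦ c ≤ μ.real (Icc (S.ξ₀ b) (S.ξ₁ b)))
    (fun _ _ _ ↦ le_trans) fun b ↦ ?_
  obtain ⟨l, hl, hw, hhead⟩ : ∃ l : List (Fin (2 * r)), ∃ hl : l ≠ [],
      S.IsWord (l ++ [a]) ∧ l.head hl = b := by
    by_cases hab : a = bar b
    · obtain ⟨c, hcb, hca⟩ := S.exists_ne_ne (bar b) (bar a)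
      exact ⟨[b, c], by simp, List.isChain_cons_cons.2 ⟨hcb, S.isWord_pair (ne_bar_comm.1 hca)⟩,
        rfl⟩
    · exact ⟨[b], by simp, S.isWord_pair hab, rfl⟩
  have hsub : S.wordI (l ++ [a]) ⊆ Icc (S.ξ₀ b) (S.ξ₁ b) := by
    simpa [List.head_append_of_ne_nil hl, hhead] using S.wordI_subset_head hw (by simp)
  have hpos : 0 < (K.c₁ * ivlen (S.wordI (l ++ [a]))) ^ δ * μ.real (Icc (S.ξ₀ a) (S.ξ₁ a)) :=
    mul_pos (Real.rpow_pos_of_pos (mul_pos K.c₁_pos (S.ivlen_wordI_pos hw (by simp))) δ)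
      (ENNReal.toReal_pos ha (measure_ne_top μ _))
  exact ⟨_, hpos, (K.measureReal_wordI_append_singleton_mem_Icc hμ hδ hw).1.trans
    (measureReal_mono hsub)⟩

/-- The first prefix of `l` whose interval has length at most `τ` lies in `Z(τ)`. -/
lemma exists_mem_Zpart_of_ivlen_le (hl : S.IsWord l) (hne : l ≠ []) (hτ : ivlen (S.wordI l) ≤ τ)
    {x : ℝ} (hx : x ∈ S.wordI l) : ∃ m ∈ S.Zpart τ, x ∈ S.wordI m := by
  induction l using List.reverseRecOn with
  | nil => exact absurd rfl hne
  | append_singleton l b ih =>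
    by_cases hstop : l = [] ∨ τ < ivlen (S.wordI l)
    · exact ⟨l ++ [b], ⟨hl, hne, hτ, by rw [List.dropLast_concat]; exact hstop⟩, hx⟩
    · rw [not_or, not_lt] at hstop
      exact ih hl.of_append hstop.1 hstop.2 (S.wordI_append_singleton_subset hstop.1 hl hx)

lemma exists_forall_ivlen_wordI_lt (hτ : 0 < τ) :
    ∃ n, ∀ m, S.IsWord m → n < m.length → ivlen (S.wordI m) < τ := by
  obtain ⟨K⟩ := S.nonempty_constants
  obtain ⟨n, hn⟩ := exists_pow_lt_of_lt_one (div_pos hτ (by linarith [K.R_pos] : 0 < 2 * K.R))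
    (sub_lt_self 1 K.ε_pos)
  refine ⟨n, fun m hm hlen ↦
    (K.ivlen_wordI_le_pow hm (List.ne_nil_of_length_pos (by omega))).trans_lt ?_⟩
  calc 2 * K.R * (1 - K.ε) ^ (m.length - 1) ≤ 2 * K.R * (1 - K.ε) ^ n :=
        mul_le_mul_of_nonneg_left (pow_le_pow_of_le_one (by linarith [K.ε_lt_one])
          (by linarith [K.ε_pos]) (by omega)) (by linarith [K.R_pos])
    _ < τ := by rwa [lt_div_iff₀' (by linarith [K.R_pos])] at hn

lemma limitSet_subset_biUnion_Zpart (hτ : 0 < τ) : S.limitSet ⊆ ⋃ m ∈ S.Zpart τ, S.wordI m := by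
  intro x hx
  obtain ⟨n, hn⟩ := S.exists_forall_ivlen_wordI_lt hτ
  obtain ⟨l, ⟨hl, hlen⟩, hxl⟩ := mem_iUnion₂.1 (mem_iInter.1 hx n)
  obtain ⟨m, hm, hxm⟩ := exists_mem_Zpart_of_ivlen_le hl (List.ne_nil_of_length_pos (by omega))
    (hn l hl (by omega)).le hxl
  exact mem_biUnion hm hxm

lemma finite_Zpart (hτ : 0 < τ) : (S.Zpart τ).Finite := by
  obtain ⟨n, hn⟩ := S.exists_forall_ivlen_wordI_lt hτ
  refine (List.finite_length_le _ (n + 1)).subset fun m hmZ ↦ ?_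
  obtain ⟨hm, -, -, hdrop⟩ := hmZ
  change m.length ≤ n + 1
  by_contra! hlen
  have hdrop_ne : m.dropLast ≠ [] := List.ne_nil_of_length_pos (by simp; omega)
  have := hn _ hm.dropLast (by simp; omega)
  exact hdrop.elim hdrop_ne fun h ↦ (lt_asymm h this)

lemma not_prefix_of_mem_Zpart (hm : m ∈ S.Zpart τ) (hm' : m' ∈ S.Zpart τ) (hne : m ≠ m') :
    ¬ m <+: m' := by
  obtain ⟨hw, hm₀, hlen, -⟩ := hm
  obtain ⟨hw', hm₀', -, hdrop'⟩ := hm'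
  intro hpre
  rw [← List.dropLast_append_getLast hm₀'] at hpre
  obtain hpre | hpre := List.prefix_concat_iff.1 hpre
  · exact hne (hpre.trans (List.dropLast_append_getLast hm₀'))
  have hdrop_ne : m'.dropLast ≠ [] := by rintro h; exact hm₀ (List.prefix_nil.1 (h ▸ hpre))
  have := ivlen_mono (S.isBounded_wordI hw hm₀) (S.wordI_subset_of_prefix hw'.dropLast hm₀ hpre)
  exact hdrop'.elim hdrop_ne fun h ↦ (lt_irrefl _ ((h.trans_le this).trans_le hlen))

lemma pairwiseDisjoint_Zpart : (S.Zpart τ).PairwiseDisjoint S.wordI :=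
  fun _ hm _ hm' hne ↦ S.disjoint_wordI hm.1 hm'.1 hm.2.1 hm'.2.1
    (not_prefix_of_mem_Zpart hm hm' hne) (not_prefix_of_mem_Zpart hm' hm hne.symm)

lemma sum_measureReal_Zpart (hμ : S.IsPS δ μ) (hτ : 0 < τ) :
    ∑ m ∈ (S.finite_Zpart hτ).toFinset, μ.real (S.wordI m) = 1 := by
  have := hμ.1
  have hmeas : ∀ m ∈ (S.finite_Zpart hτ).toFinset, MeasurableSet (S.wordI m) :=
    fun m hm ↦ by
      rw [Set.Finite.mem_toFinset] at hm
      exact S.measurableSet_wordI hm.1 hm.2.1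
  rw [← measureReal_biUnion_finset (by simpa using pairwiseDisjoint_Zpart) hmeas,
    measureReal_def, (prob_compl_eq_zero_iff (Finset.measurableSet_biUnion _ hmeas)).1,
    ENNReal.toReal_one]
  refine measure_mono_null (compl_subset_compl.2 ?_) hμ.2.1
  simpa using S.limitSet_subset_biUnion_Zpart hτ

end SchottkyData

theorem partition_count_general (r : ℕ) (S : SchottkyData r) (δ : ℝ)
    (hδ0 : 0 < δ) (μ : Measure ℝ) (hμ : S.IsPS δ μ) :
    ∃ C > (0 : ℝ), ∀ τ : ℝ, 0 < τ → τ ≤ 1 →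
      C⁻¹ * τ ^ (-δ) ≤ ((S.Zpart τ).ncard : ℝ) ∧
      ((S.Zpart τ).ncard : ℝ) ≤ C * τ ^ (-δ) := by
  obtain ⟨K⟩ := S.nonempty_constants
  obtain ⟨m₀, hm₀, hm₀_le⟩ := S.exists_pos_le_measureReal_Icc hμ hδ0
  set A := (K.c₁ * min K.ε K.ℓ) ^ δ * m₀
  set B := K.c₂ ^ δ
  have hA : 0 < A := mul_pos (Real.rpow_pos_of_pos
    (mul_pos K.c₁_pos (lt_min K.ε_pos K.ℓ_pos)) δ) hm₀
  have hB : 0 < B := Real.rpow_pos_of_pos K.c₂_pos δ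
  refine ⟨max A⁻¹ B, hB.trans_le (le_max_right _ _), fun τ hτ₀ hτ₁ ↦ ?_⟩
  have hτδ : 0 < τ ^ δ := Real.rpow_pos_of_pos hτ₀ δ
  obtain ⟨hlow, hup⟩ := inv_le_card_and_card_le_inv (S.sum_measureReal_Zpart hμ hτ₀)
    (mul_pos hA hτδ) (mul_pos hB hτδ) fun m hm ↦
      K.measureReal_wordI_mem_Icc_of_mem_Zpart hμ hδ0 hm₀.le hm₀_le hτ₁
        ((Set.Finite.mem_toFinset _).1 hm)
  rw [Set.ncard_eq_toFinset_card _ (S.finite_Zpart hτ₀), Real.rpow_neg hτ₀.le]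
  rw [mul_inv] at hlow hup
  constructor
  · exact le_trans (by gcongr; exact le_max_right _ _) hlow
  · exact hup.trans (by gcongr; exact le_max_left _ _)

/-- **Cardinality of the partition `Z(τ)`:** there is `C_Γ > 0` depending only on the
Schottky data such that `C_Γ⁻¹ τ^{-δ} ≤ #Z(τ) ≤ C_Γ τ^{-δ}` for every `τ ∈ (0,1]`. -/
theorem partition_count (r : ℕ) (S : SchottkyData r) (δ : ℝ)
    (hδ0 : 0 < δ) (hδ1 : δ < 1) (μ : Measure ℝ) (hμ : S.IsPS δ μ) :
    ∃ C > (0 : ℝ), ∀ τ : ℝ, 0 < τ → τ ≤ 1 →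
      C⁻¹ * τ ^ (-δ) ≤ ((S.Zpart τ).ncard : ℝ) ∧
      ((S.Zpart τ).ncard : ℝ) ≤ C * τ ^ (-δ) :=
  partition_count_general r S δ hδ0 μ hμ

end
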